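/- Let ℍ be the real quaternions with imaginary units i, j, k, let n ≥ 1, and let 𝔤 = sp(n+1) ⊕ ℝ, where sp(n+1) = {A ∈ ℍ^{(n+1)×(n+1)} : A + conj(A)ᵗ = 0} with the commutator bracket and the ℝ-summand is central, equipped with the invariant inner product ⟨(A,a),(B,b)⟩ = −Re(tr(A·B)) + a·b. Let 𝔥 = {(diag(C, a·i), a) : C ∈ sp(n), a ∈ ℝ}, let 𝔪 = 𝔥^⊥, and 𝔪₀ = {(diag(0_n, a·i), −a) : a ∈ ℝ}. If X ∈ 𝔪 satisfies ⁅X, v⁆ ∈ 𝔥 for every v ∈ 𝔪₀, then X ∈ 𝔪₀. -/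

import Mathlib

/-!
Write `X = (A, a)` and test the hypothesis on `(E, -1) ∈ 𝔪₀`, where `E = diag(0, …, 0, i)`.
Membership of `⁅A, E⁆` in `𝔥` kills the last row and column of `A` off the corner and forces the
corner entry to commute with `i`; being purely imaginary, it is then a real multiple of `i`, and
the multiple is `-a` by orthogonality of `X` to `(E, 1) ∈ 𝔥`. Finally `A` with its last row and
column erased, paired with `0`, lies in `𝔥`; orthogonality to it says that the squared norms of the
entries of the upper-left block of `A` sum to zero, because for skew-Hermitian `B` the number
`-Re tr(A B)` is the real Frobenius inner product `∑ Re(A_pq · conj B_pq)`.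
-/

open Matrix

/-- The quaternion imaginary unit `i`. -/
noncomputable def qi : Quaternion ℝ := ⟨0, 1, 0, 0⟩

/-- The ambient Lie algebra: quaternionic `(n+1)×(n+1)` matrices (with the commutator
bracket) times a central copy of `ℝ`.  The Lie algebra `𝔤 = sp(n+1) ⊕ ℝ` is the
subalgebra of pairs `(A, a)` with `A + conj(A)ᵗ = 0`. -/
abbrev SpU (n : ℕ) := Matrix (Fin (n + 1)) (Fin (n + 1)) (Quaternion ℝ) × ℝ

/-- The invariant inner product `⟨(A,a),(B,b)⟩ = −Re(tr(A·B)) + a·b`. -/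
noncomputable def ipSpU (n : ℕ) (x y : SpU n) : ℝ := -((x.1 * y.1).trace).re + x.2 * y.2

open Quaternion

@[simp] lemma re_qi : qi.re = 0 := rfl
@[simp] lemma imI_qi : qi.imI = 1 := rfl
@[simp] lemma imJ_qi : qi.imJ = 0 := rfl
@[simp] lemma imK_qi : qi.imK = 0 := rfl

lemma star_qi : star qi = -qi := by
  ext <;> simp

lemma qi_ne_zero : qi ≠ 0 :=
  fun h => one_ne_zero (congrArg QuaternionAlgebra.imI h)

lemma re_mul_qi (q : ℍ[ℝ]) : (q * qi).re = -q.imI := by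
  simp [Quaternion.re_mul]

lemma eq_imI_smul_qi_of_commute {q : ℍ[ℝ]} (hre : q.re = 0) (h : q * qi = qi * q) :
    q = q.imI • qi := by
  rw [Quaternion.ext_iff] at h ⊢
  simp only [Quaternion.imJ_mul, Quaternion.imK_mul, re_qi, imI_qi, imJ_qi, imK_qi] at h
  refine ⟨by simpa using hre, by simp, ?_, ?_⟩ <;> simp <;> linarith

lemma Quaternion.re_sum {α : Type*} (s : Finset α) (f : α → ℍ[ℝ]) :
    (∑ x ∈ s, f x).re = ∑ x ∈ s, (f x).re :=
  map_sum (QuaternionAlgebra.reₗ _ _ _) f s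

section SkewHermitian

variable {ι : Type*} {A B : Matrix ι ι ℍ[ℝ]}

lemma apply_eq_neg_star_of_add_conjTranspose_eq_zero (hA : A + Aᴴ = 0) (p q : ι) :
    A q p = -star (A p q) := by
  simpa [eq_neg_iff_add_eq_zero] using congrFun₂ hA q p

lemma re_apply_self_of_add_conjTranspose_eq_zero (hA : A + Aᴴ = 0) (p : ι) : (A p p).re = 0 := by
  have h := congrArg QuaternionAlgebra.re (apply_eq_neg_star_of_add_conjTranspose_eq_zero hA p p)
  rw [Quaternion.re_neg, Quaternion.re_star] at h
  linarith

lemma re_trace_mul_of_add_conjTranspose_eq_zero [Fintype ι] (hB : B + Bᴴ = 0) :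
    (A * B).trace.re = -∑ p, ∑ q, (A p q * star (B p q)).re := by
  rw [← Finset.sum_neg_distrib]
  simp only [trace, diag_apply, mul_apply, re_sum]
  refine Finset.sum_congr rfl fun p _ => ?_
  rw [← Finset.sum_neg_distrib]
  refine Finset.sum_congr rfl fun q _ => ?_
  rw [apply_eq_neg_star_of_add_conjTranspose_eq_zero hB p q, mul_neg, Quaternion.re_neg]

end SkewHermitian

section Corner

variable {ι α : Type*} [DecidableEq ι] (l : ι)

def eraseRowCol [Zero α] (A : Matrix ι ι α) : Matrix ι ι α :=
  of fun p q => if p ≠ l ∧ q ≠ l then A p q else 0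

variable {A : Matrix ι ι ℍ[ℝ]}

lemma eraseRowCol_add_conjTranspose_eq_zero (hA : A + Aᴴ = 0) :
    eraseRowCol l A + (eraseRowCol l A)ᴴ = 0 := by
  ext p q : 1
  by_cases h : p ≠ l ∧ q ≠ l
  · simpa [eraseRowCol, h, h.symm] using congrFun₂ hA p q
  · have h' : ¬(q ≠ l ∧ p ≠ l) := fun h' => h h'.symm
    simp [eraseRowCol, h, h']

variable [Fintype ι]

lemma re_trace_mul_eraseRowCol (hA : A + Aᴴ = 0) :
    (A * eraseRowCol l A).trace.re =
      -∑ p, ∑ q, if p ≠ l ∧ q ≠ l then normSq (A p q) else 0 := by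
  rw [re_trace_mul_of_add_conjTranspose_eq_zero (eraseRowCol_add_conjTranspose_eq_zero l hA)]
  congr! 4 with p _ q _
  split_ifs with h <;> simp [eraseRowCol, h, Quaternion.self_mul_star]

lemma apply_eq_zero_of_re_trace_mul_eraseRowCol_eq_zero (hA : A + Aᴴ = 0)
    (h : (A * eraseRowCol l A).trace.re = 0) {p q : ι} (hp : p ≠ l) (hq : q ≠ l) : A p q = 0 := by
  rw [re_trace_mul_eraseRowCol l hA, neg_eq_zero] at h
  have hnonneg : ∀ p q, 0 ≤ if p ≠ l ∧ q ≠ l then normSq (A p q) else 0 := fun p q => by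
    split_ifs <;> simp [normSq_nonneg]
  rw [Fintype.sum_eq_zero_iff_of_nonneg fun p => Finset.sum_nonneg fun q _ => hnonneg p q] at h
  have hp' := congrFun h p
  rw [Pi.zero_apply, Fintype.sum_eq_zero_iff_of_nonneg (hnonneg p)] at hp'
  simpa [hp, hq] using congrFun hp' q

end Corner

section SingleCommutator

variable {ι α : Type*} [DecidableEq ι] [Fintype ι] [Ring α] (A : Matrix ι ι α) (l : ι) (c : α)

lemma lie_single_apply_of_ne_left {p : ι} (hp : p ≠ l) : ⁅A, single l l c⁆ p l = A p l * c := by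
  simp [Ring.lie_def, hp]

lemma lie_single_apply_of_ne_right {q : ι} (hq : q ≠ l) :
    ⁅A, single l l c⁆ l q = -(c * A l q) := by
  simp [Ring.lie_def, hq]

lemma lie_single_apply_same : ⁅A, single l l c⁆ l l = A l l * c - c * A l l := by
  simp [Ring.lie_def]

variable {A l c}

lemma apply_eq_zero_of_lie_single_apply_eq_zero [NoZeroDivisors α] (hc : c ≠ 0) {p : ι}
    (hp : p ≠ l) (h : ⁅A, single l l c⁆ p l = 0 ∧ ⁅A, single l l c⁆ l p = 0) :
    A p l = 0 ∧ A l p = 0 := by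
  rw [lie_single_apply_of_ne_left A l c hp, lie_single_apply_of_ne_right A l c hp] at h
  simpa [hc] using h

end SingleCommutator

lemma single_add_conjTranspose_eq_zero {ι α : Type*} [DecidableEq ι] [AddGroup α]
    [StarAddMonoid α] (l : ι) {c : α} (hc : star c = -c) : single l l c + (single l l c)ᴴ = 0 := by
  rw [conjTranspose_single, hc, ← single_add, add_neg_cancel, single_zero]

theorem mem_m0_of_bracket_m0_mem_h_general
    (n : ℕ)
    (𝔥 : Submodule ℝ (SpU n))
    (h𝔥 : ∀ x : SpU n, x ∈ 𝔥 ↔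
      (x.1 + x.1ᴴ = 0 ∧
        (∀ p : Fin (n + 1), p ≠ Fin.last n →
          x.1 p (Fin.last n) = 0 ∧ x.1 (Fin.last n) p = 0) ∧
        x.1 (Fin.last n) (Fin.last n) = x.2 • qi))
    (𝔪 : Submodule ℝ (SpU n))
    (h𝔪 : ∀ x : SpU n, x ∈ 𝔪 ↔ (x.1 + x.1ᴴ = 0 ∧ ∀ w ∈ 𝔥, ipSpU n x w = 0))
    (𝔪₀ : Submodule ℝ (SpU n))
    (h𝔪₀ : ∀ x : SpU n, x ∈ 𝔪₀ ↔
      ((∀ p q : Fin (n + 1), ¬(p = Fin.last n ∧ q = Fin.last n) → x.1 p q = 0) ∧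
        x.1 (Fin.last n) (Fin.last n) = (-x.2) • qi)) :
    ∀ X ∈ 𝔪, (∀ v ∈ 𝔪₀, ⁅X, v⁆ ∈ 𝔥) → X ∈ 𝔪₀ := by
  intro X hX𝔪 hbracket
  obtain ⟨hX, horth⟩ := (h𝔪 X).mp hX𝔪
  set l := Fin.last n
  have hv : ((single l l qi, -1) : SpU n) ∈ 𝔪₀ :=
    (h𝔪₀ _).mpr ⟨fun p q hpq => single_apply_of_ne _ _ _ _ _ fun h => hpq ⟨h.1.symm, h.2.symm⟩,
      by simp⟩
  have hlie : ⁅X, ((single l l qi, -1) : SpU n)⁆ = (⁅X.1, single l l qi⁆, 0) :=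
    Prod.ext rfl (by simp [Ring.lie_def])
  obtain ⟨-, hoff, hcorner⟩ := (h𝔥 _).mp (hlie ▸ hbracket _ hv)
  have hrowcol : ∀ p ≠ l, X.1 p l = 0 ∧ X.1 l p = 0 := fun p hp =>
    apply_eq_zero_of_lie_single_apply_eq_zero qi_ne_zero hp (hoff p hp)
  have hcomm : X.1 l l * qi = qi * X.1 l l :=
    sub_eq_zero.mp (by simpa [lie_single_apply_same] using hcorner)
  have hqi𝔥 : ((single l l qi, 1) : SpU n) ∈ 𝔥 :=
    (h𝔥 _).mpr ⟨single_add_conjTranspose_eq_zero l star_qi, fun p hp => by simp [hp.symm], by simp⟩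
  have himI : (X.1 l l).imI = -X.2 := by
    have h := horth _ hqi𝔥
    rw [ipSpU, trace_mul_single, op_smul_eq_mul, re_mul_qi, mul_one] at h
    linarith
  have herase𝔥 : ((eraseRowCol l X.1, 0) : SpU n) ∈ 𝔥 :=
    (h𝔥 _).mpr ⟨eraseRowCol_add_conjTranspose_eq_zero l hX, fun p hp => by simp [eraseRowCol, hp],
      by simp [eraseRowCol]⟩
  have hblock : ∀ {p q}, p ≠ l → q ≠ l → X.1 p q = 0 :=
    apply_eq_zero_of_re_trace_mul_eraseRowCol_eq_zero l hX (by simpa [ipSpU] using horth _ herase𝔥)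
  refine (h𝔪₀ X).mpr ⟨fun p q hpq => ?_, ?_⟩
  · by_cases hp : p = l
    · subst hp
      exact (hrowcol q fun hq => hpq ⟨rfl, hq⟩).2
    by_cases hq : q = l
    · subst hq
      exact (hrowcol p hp).1
    · exact hblock hp hq
  · rw [eq_imI_smul_qi_of_commute (re_apply_self_of_add_conjTranspose_eq_zero hX l) hcomm, himI]

/-- **Key step for `S^{4n+3} = Sp(n+1)U(1)/Sp(n)U(1)`.**
Here `𝔤 = sp(n+1) ⊕ ℝ` with the invariant inner product
`⟨(A,a),(B,b)⟩ = −Re(tr(A·B)) + a·b`,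
`𝔥 = {(diag(C, a·i), a) : C ∈ sp(n), a ∈ ℝ}`, `𝔪 = 𝔥ᗮ` (inside `𝔤`) and
`𝔪₀ = {(diag(0_n, a·i), −a) : a ∈ ℝ}`.  If `X ∈ 𝔪` satisfies `⁅X, v⁆ ∈ 𝔥` for every
`v ∈ 𝔪₀`, then `X ∈ 𝔪₀`. -/
theorem mem_m0_of_bracket_m0_mem_h
    (n : ℕ) (hn : 1 ≤ n)
    (𝔥 : Submodule ℝ (SpU n))
    (h𝔥 : ∀ x : SpU n, x ∈ 𝔥 ↔
      (x.1 + x.1ᴴ = 0 ∧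
        (∀ p : Fin (n + 1), p ≠ Fin.last n →
          x.1 p (Fin.last n) = 0 ∧ x.1 (Fin.last n) p = 0) ∧
        x.1 (Fin.last n) (Fin.last n) = x.2 • qi))
    (𝔪 : Submodule ℝ (SpU n))
    (h𝔪 : ∀ x : SpU n, x ∈ 𝔪 ↔ (x.1 + x.1ᴴ = 0 ∧ ∀ w ∈ 𝔥, ipSpU n x w = 0))
    (𝔪₀ : Submodule ℝ (SpU n))
    (h𝔪₀ : ∀ x : SpU n, x ∈ 𝔪₀ ↔
      ((∀ p q : Fin (n + 1), ¬(p = Fin.last n ∧ q = Fin.last n) → x.1 p q = 0) ∧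
        x.1 (Fin.last n) (Fin.last n) = (-x.2) • qi)) :
    ∀ X ∈ 𝔪, (∀ v ∈ 𝔪₀, ⁅X, v⁆ ∈ 𝔥) → X ∈ 𝔪₀ :=
  mem_m0_of_bracket_m0_mem_h_general n 𝔥 h𝔥 𝔪 h𝔪 𝔪₀ h𝔪₀
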